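/- arXiv:2003.00126 — 5 statements merged into one kernel-verified Lean document; each statement's English description precedes it below -/
import Mathlib

section
/- Let Δ_B be a propositional formula over Boolean variables B₁,…,B_n. Replace each literal B_i by the real constraint Z_i > 0 and each ¬B_i by Z_i < 0, and conjoin the bounding box constraints −1 ≤ Z_i ≤ 1 for each i, obtaining a subset S ⊆ ℝⁿ of points satisfying the resulting constraints. Then the Lebesgue measure (volume) of S equals the number of satisfying assignments of Δ_B. -/
/-- Propositional formulas over `n` Boolean variables, built from literals
`B i` and `¬ B i` by conjunction and disjunction. -/
inductive PropForm (n : ℕ) where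
  | pos (i : Fin n) : PropForm n
  | neg (i : Fin n) : PropForm n
  | conj (φ ψ : PropForm n) : PropForm n
  | disj (φ ψ : PropForm n) : PropForm n

/-- Boolean semantics. -/
def PropForm.evalB {n : ℕ} : PropForm n → (Fin n → Bool) → Bool
  | pos i, b => b i
  | neg i, b => ! b i
  | conj φ ψ, b => φ.evalB b && ψ.evalB b
  | disj φ ψ, b => φ.evalB b || ψ.evalB b

/-- Real semantics obtained by substituting `Z i > 0` for `B i` and
`Z i < 0` for `¬ B i`. -/
def PropForm.evalR {n : ℕ} : PropForm n → (Fin n → ℝ) → Prop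
  | pos i, z => 0 < z i
  | neg i, z => z i < 0
  | conj φ ψ, z => φ.evalR z ∧ ψ.evalR z
  | disj φ ψ, z => φ.evalR z ∨ ψ.evalR z

open MeasureTheory Set

/-- The half-cell of `[-1,1]` corresponding to a Boolean value. -/
def cellB (t : Bool) : Set ℝ := if t then Set.Ioc 0 1 else Set.Ico (-1) 0

lemma cellB_measurable (t : Bool) : MeasurableSet (cellB t) := by
  cases t <;> simp [cellB, measurableSet_Ioc, measurableSet_Ico]

lemma cellB_volume (t : Bool) : volume (cellB t) = 1 := by
  cases t <;> simp [cellB, Real.volume_Ioc, Real.volume_Ico]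

lemma mem_cellB_iff {x : ℝ} (hx : x ≠ 0) (hbox : x ∈ Set.Icc (-1 : ℝ) 1) (t : Bool) :
    x ∈ cellB t ↔ t = decide (0 < x) := by
  rcases hx.lt_or_gt with h | h <;> cases t <;>
    simp_all [cellB, le_of_lt, h.not_gt, h.le, h.not_ge]

lemma evalR_iff {n : ℕ} (φ : PropForm n) (z : Fin n → ℝ) (hz : ∀ i, z i ≠ 0) :
    φ.evalR z ↔ φ.evalB (fun i => decide (0 < z i)) = true := by
  induction φ with
  | pos i => simp [PropForm.evalR, PropForm.evalB]
  | neg i =>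
      simp only [PropForm.evalR, PropForm.evalB, Bool.not_eq_true', decide_eq_false_iff_not]
      exact ⟨fun h => h.not_gt, fun h => ((hz i).lt_or_gt).resolve_right h⟩
  | conj φ ψ ih1 ih2 => simp [PropForm.evalR, PropForm.evalB, ih1, ih2]
  | disj φ ψ ih1 ih2 => simp [PropForm.evalR, PropForm.evalB, ih1, ih2]

/-- Boolean-to-real reduction: the Lebesgue volume of the region of
`[-1,1]ⁿ` satisfying the real substitution of `Δ_B` equals the number of
satisfying Boolean assignments of `Δ_B`. -/
theorem stmt5 (n : ℕ) (φ : PropForm n) :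
    MeasureTheory.volume
      {z : Fin n → ℝ | (∀ i, z i ∈ Set.Icc (-1 : ℝ) 1) ∧ φ.evalR z} =
    (Finset.univ.filter (fun b : Fin n → Bool => φ.evalB b)).card := by
  classical
  set S := {z : Fin n → ℝ | (∀ i, z i ∈ Set.Icc (-1 : ℝ) 1) ∧ φ.evalR z} with hS
  set sat := Finset.univ.filter (fun b : Fin n → Bool => φ.evalB b) with hsat
  set C : (Fin n → Bool) → Set (Fin n → ℝ) :=
    fun b => Set.pi Set.univ (fun i => cellB (b i)) with hC
  set N : Set (Fin n → ℝ) := ⋃ i, {z | z i = 0} with hN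
  have hNnull : volume N = 0 := by
    refine measure_iUnion_null fun i => ?_
    have hsub : {z : Fin n → ℝ | z i = 0} ⊆
        Set.pi Set.univ (fun j => if j = i then ({0} : Set ℝ) else Set.univ) := by
      intro z hz j _
      by_cases hj : j = i
      · subst hj; simpa using hz
      · simp [hj]
    refine measure_mono_null hsub ?_
    rw [volume_pi_pi]
    exact Finset.prod_eq_zero (Finset.mem_univ i) (by simp)
  -- cells in each coordinate
  have key : ∀ z ∉ N, (z ∈ S ↔ z ∈ ⋃ b ∈ sat, C b) := by
    intro z hzN
    have hz : ∀ i, z i ≠ 0 := by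
      intro i h
      exact hzN (Set.mem_iUnion.2 ⟨i, h⟩)
    constructor
    · rintro ⟨hbox, hR⟩
      refine Set.mem_iUnion₂.2 ⟨fun i => decide (0 < z i), ?_, ?_⟩
      · exact Finset.mem_filter.2 ⟨Finset.mem_univ _, (evalR_iff φ z hz).1 hR⟩
      · intro i _
        exact (mem_cellB_iff (hz i) (hbox i) _).2 rfl
    · intro h
      rcases Set.mem_iUnion₂.1 h with ⟨b, hb, hzb⟩
      have hbox : ∀ i, z i ∈ Set.Icc (-1 : ℝ) 1 := by
        intro i
        have hthis := hzb i (Set.mem_univ i)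
        cases hbi : b i <;> simp only [cellB, hbi, if_true, if_false, Set.mem_Ioc,
          Set.mem_Ico, Bool.false_eq_true, ite_false, ite_true] at hthis <;>
          exact ⟨by linarith [hthis.1, hthis.2], by linarith [hthis.1, hthis.2]⟩
      have hbdec : b = fun i => decide (0 < z i) := by
        funext i
        exact (mem_cellB_iff (hz i) (hbox i) (b i)).1 (hzb i (Set.mem_univ i))
      have hsatb := (Finset.mem_filter.1 hb).2
      rw [hbdec] at hsatb
      exact ⟨hbox, (evalR_iff φ z hz).2 hsatb⟩
  have hcongr : S =ᵐ[volume] ⋃ b ∈ sat, C b := by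
    have : ∀ᵐ z ∂(volume : Measure (Fin n → ℝ)), z ∉ N := by
      rw [ae_iff]; simpa using hNnull
    filter_upwards [this] with z hz
    exact eq_iff_iff.2 (key z hz)
  rw [hS] at hcongr
  rw [measure_congr hcongr]
  have hmeas : ∀ b ∈ sat, MeasurableSet (C b) := by
    intro b _
    exact MeasurableSet.univ_pi fun i => cellB_measurable (b i)
  have hdisj : (sat : Set (Fin n → Bool)).PairwiseDisjoint C := by
    intro b _ b' _ hne
    refine Set.disjoint_left.2 fun z hzb hzb' => hne ?_
    funext i
    have h1 := hzb i (Set.mem_univ i)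
    have h2 := hzb' i (Set.mem_univ i)
    cases hbi : b i <;> cases hbi' : b' i <;>
      simp only [cellB, hbi, hbi', Bool.false_eq_true, ite_false, ite_true,
        Set.mem_Ioc, Set.mem_Ico] at h1 h2 <;>
      first
        | rfl
        | (exfalso; linarith [h1.1, h1.2, h2.1, h2.2])
  rw [measure_biUnion_finset hdisj hmeas]
  have hvol : ∀ b, volume (C b) = 1 := by
    intro b
    rw [hC, volume_pi_pi]
    simp [cellB_volume]
  simp [hvol]
end

section
/- Counting the satisfying assignments of a propositional 2-CNF formula reduces to computing the volume of a region in ℝⁿ defined by a conjunction of clauses each involving at most two real variables: if Δ_B is a 2-CNF over n Boolean variables, the region obtained by the sign-encoding Z_i > 0 / Z_i < 0 inside [−1,1]ⁿ is defined by clauses over at most two real variables each, and its volume equals #SAT(Δ_B). -/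
/-- A literal is a variable index together with a polarity; a CNF formula is a
list of clauses, each clause a list of literals. -/
abbrev CNF (n : ℕ) := List (List (Fin n × Bool))

/-- Boolean satisfaction of a CNF. -/
def CNF.evalB {n : ℕ} (Δ : CNF n) (b : Fin n → Bool) : Bool :=
  Δ.all fun C => C.any fun l => if l.2 then b l.1 else ! b l.1

/-- Real satisfaction of the sign-encoding of a clause: a positive literal
`B i` becomes `Z i > 0` and a negative literal `¬ B i` becomes `Z i < 0`. -/
def clauseR {n : ℕ} (C : List (Fin n × Bool)) (z : Fin n → ℝ) : Prop :=
  ∃ l ∈ C, if l.2 then 0 < z l.1 else z l.1 < 0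

open MeasureTheory Set

def sBox {n : ℕ} (b : Fin n → Bool) : Set (Fin n → ℝ) :=
  Set.pi Set.univ (fun i => if b i then Set.Ioc (0:ℝ) 1 else Set.Ico (-1:ℝ) 0)

lemma sBox_meas {n : ℕ} (b : Fin n → Bool) : MeasurableSet (sBox b) := by
  apply MeasurableSet.univ_pi
  intro i
  split <;> [exact measurableSet_Ioc; exact measurableSet_Ico]

lemma sBox_vol {n : ℕ} (b : Fin n → Bool) : volume (sBox b) = 1 := by
  rw [sBox, volume_pi_pi]
  rw [Finset.prod_eq_one]
  intro i _
  split
  · rw [Real.volume_Ioc]; norm_num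
  · rw [Real.volume_Ico]; norm_num

lemma sBox_disj {n : ℕ} {b b' : Fin n → Bool} (h : b ≠ b') :
    Disjoint (sBox b) (sBox b') := by
  obtain ⟨i, hi⟩ := Function.ne_iff.mp h
  rw [Set.disjoint_left]
  intro z hz hz'
  have h1 := hz i (mem_univ i)
  have h2 := hz' i (mem_univ i)
  rcases Bool.eq_false_or_eq_true (b i) with hb | hb <;>
    rcases Bool.eq_false_or_eq_true (b' i) with hb' | hb' <;>
      simp [hb, hb'] at h1 h2 hi <;> linarith [h1.1, h2.2, h1.2, h2.1]

/-- #2SAT reduces to volume computation of a region defined by clauses over at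
most two real variables each: for a 2-CNF `Δ`, each clause of the sign-encoded
real formula mentions at most two real variables, and the volume of the
encoded region inside `[-1,1]ⁿ` equals the number of satisfying assignments. -/
theorem stmt6 (n : ℕ) (Δ : CNF n) (h2 : ∀ C ∈ Δ, C.length ≤ 2) :
    (∀ C ∈ Δ, (C.map Prod.fst).toFinset.card ≤ 2) ∧
    MeasureTheory.volume
      {z : Fin n → ℝ | (∀ i, z i ∈ Set.Icc (-1 : ℝ) 1) ∧ ∀ C ∈ Δ, clauseR C z} =
    (Finset.univ.filter (fun b : Fin n → Bool => Δ.evalB b)).card := by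
  constructor
  · intro C hC
    calc (C.map Prod.fst).toFinset.card ≤ (C.map Prod.fst).length :=
          List.toFinset_card_le _
      _ = C.length := List.length_map _
      _ ≤ 2 := h2 C hC
  · set Sat := Finset.univ.filter (fun b : Fin n → Bool => Δ.evalB b) with hSat
    set S : Set (Fin n → ℝ) :=
      {z | (∀ i, z i ∈ Set.Icc (-1 : ℝ) 1) ∧ ∀ C ∈ Δ, clauseR C z} with hS
    set T : Set (Fin n → ℝ) := ⋃ b ∈ Sat, sBox b with hT
    set N : Set (Fin n → ℝ) := ⋃ i, {z | z i = 0} with hN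
    have hNvol : volume N = 0 := by
      rw [hN]
      refine measure_iUnion_null fun i => ?_
      rw [MeasureTheory.volume_pi]
      exact MeasureTheory.Measure.pi_hyperplane _ i 0
    have hTS : T ⊆ S := by
      rintro z hz
      rw [hT] at hz
      simp only [mem_iUnion] at hz
      obtain ⟨b, hb, hzb⟩ := hz
      rw [hSat, Finset.mem_filter] at hb
      have hbsat := hb.2
      rw [CNF.evalB, List.all_eq_true] at hbsat
      constructor
      · intro i
        have hzi := hzb i (mem_univ i)
        simp only [sBox] at hzi
        rcases Bool.eq_false_or_eq_true (b i) with hbi | hbi <;> simp [hbi] at hzi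
        · exact ⟨by linarith [hzi.1], hzi.2⟩
        · exact ⟨hzi.1, by linarith [hzi.2]⟩
      · intro C hC
        have := hbsat C hC
        rw [List.any_eq_true] at this
        obtain ⟨l, hl, hlt⟩ := this
        refine ⟨l, hl, ?_⟩
        have hz1 := hzb l.1 (mem_univ l.1)
        simp only [sBox] at hz1
        rcases Bool.eq_false_or_eq_true l.2 with hp | hp <;>
          simp [hp] at hlt ⊢ <;> rw [hlt] at hz1 <;> simp at hz1
        · exact hz1.1
        · exact hz1.2
    have hSTN : S ⊆ T ∪ N := by
      intro z hz
      by_cases hzero : ∃ i, z i = 0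
      · right; rw [hN]; simp only [mem_iUnion]; exact hzero
      · left
        push_neg at hzero
        set b : Fin n → Bool := fun i => decide (0 < z i) with hb
        have hzb : z ∈ sBox b := by
          intro i _
          rcases lt_trichotomy (z i) 0 with h | h | h
          · have : b i = false := by simp [hb]; linarith
            simp [this]
            exact ⟨(hz.1 i).1, h⟩
          · exact absurd h (hzero i)
          · have : b i = true := by simp [hb, h]
            simp [this]
            exact ⟨h, (hz.1 i).2⟩
        have hbsat : Δ.evalB b = true := by
          rw [CNF.evalB, List.all_eq_true]
          intro C hC
          rw [List.any_eq_true]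
          obtain ⟨l, hl, hlt⟩ := hz.2 C hC
          refine ⟨l, hl, ?_⟩
          rcases Bool.eq_false_or_eq_true l.2 with hp | hp <;>
            simp [hp] at hlt ⊢ <;> simp [hb]
          · linarith
          · linarith
        rw [hT]
        simp only [mem_iUnion]
        exact ⟨b, by simp [hSat, hbsat], hzb⟩
    have hTvol : volume T = Sat.card := by
      rw [hT, measure_biUnion_finset ?_ (fun b _ => sBox_meas b)]
      · rw [Finset.sum_congr rfl (fun b _ => sBox_vol b)]
        simp
      · intro b _ b' _ hbb'
        exact sBox_disj hbb'
    have h1 : volume S ≤ Sat.card := by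
      calc volume S ≤ volume (T ∪ N) := measure_mono hSTN
        _ ≤ volume T + volume N := measure_union_le _ _
        _ = Sat.card := by rw [hNvol, hTvol, add_zero]
    have h2' : (Sat.card : ENNReal) ≤ volume S := hTvol ▸ measure_mono hTS
    exact le_antisymm h1 h2'
end

section
/- Let f : ℝ² → ℝ be of the form f(x, y) = ∑_{k=1}^{m} 1_{I_k}(y) · p_k(x, y) where I₁,…,I_m are disjoint intervals of ℝ and each p_k is a polynomial in two variables, and let ℓ, u : ℝ → ℝ be affine. Then g(x) = ∫_ℝ 1_{[ℓ(x), u(x)]}(y) f(x, y) dy is a piecewise polynomial function of x. -/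
open MeasureTheory Polynomial

/-- `g` is piecewise polynomial with respect to the finite breakpoint set `B`. -/
def IsPiecewisePolyOn (g : ℝ → ℝ) (B : Finset ℝ) : Prop :=
  ∃ P : ℝ → Polynomial ℝ, (∀ x, g x = (P x).eval x) ∧
    ∀ x y : ℝ, (∀ b ∈ B, b ∉ Set.uIcc x y) → P x = P y

noncomputable def pintA {A : Type*} [CommRing A] [Algebra ℝ A] (q : Polynomial A) : Polynomial A :=
  ∑ n ∈ q.support, Polynomial.C ((((n : ℝ) + 1)⁻¹) • q.coeff n) * Polynomial.X ^ (n + 1)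

lemma derivative_pintA (q : Polynomial ℝ) : derivative (pintA q) = q := by
  rw [pintA, derivative_sum]
  conv_rhs => rw [q.as_sum_support]
  refine Finset.sum_congr rfl fun n hn => ?_
  rw [derivative_C_mul_X_pow, smul_eq_mul]
  have hne : (n : ℝ) + 1 ≠ 0 := by positivity
  rw [Nat.add_sub_cancel, Nat.cast_add, Nat.cast_one]
  have h2 : ((n:ℝ) + 1)⁻¹ * q.coeff n * ((n:ℝ) + 1) = q.coeff n := by field_simp
  rw [h2, C_mul_X_pow_eq_monomial]

lemma map_pintA {A B : Type*} [CommRing A] [CommRing B] [Algebra ℝ A] [Algebra ℝ B]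
    (φ : A →ₐ[ℝ] B) (q : Polynomial A) :
    (pintA q).map (φ : A →+* B) = pintA (q.map (φ : A →+* B)) := by
  rw [pintA, Polynomial.map_sum, pintA]
  rw [Finset.sum_subset (Polynomial.support_map_subset (φ : A →+* B) q) ?_]
  · refine Finset.sum_congr rfl fun n hn => ?_
    rw [Polynomial.map_mul, Polynomial.map_C, Polynomial.map_pow, map_X, coeff_map]
    congr 1
    rw [show ((φ : A →+* B) : A → B) = ⇑φ from rfl, _root_.map_smul]
  · intro n _ hn
    have : (φ : A →+* B) (q.coeff n) = 0 := by
      simpa [Polynomial.coeff_map] using Polynomial.notMem_support_iff.mp hn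
    rw [coeff_map, this, smul_zero, map_zero, zero_mul]

lemma integral_pintA (q : Polynomial ℝ) (a b : ℝ) :
    ∫ y in a..b, q.eval y = (pintA q).eval b - (pintA q).eval a := by
  refine intervalIntegral.integral_eq_sub_of_hasDerivAt
    (f := fun t => (pintA q).eval t) (fun x _ => ?_) (q.continuous.intervalIntegrable a b)
  have := (pintA q).hasDerivAt x
  rwa [derivative_pintA] at this


def PP (g : ℝ → ℝ) : Prop := ∃ B, IsPiecewisePolyOn g B

lemma PP.congr {g1 g2 : ℝ → ℝ} (h : PP g1) (h2 : ∀ x, g1 x = g2 x) : PP g2 := by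
  obtain ⟨B, P, he, hc⟩ := h
  exact ⟨B, P, fun x => (h2 x) ▸ he x, hc⟩

lemma PP.of_polyFun (q : Polynomial ℝ) : PP (fun x => q.eval x) :=
  ⟨∅, fun _ => q, fun _ => rfl, fun _ _ _ => rfl⟩

lemma PP.zero : PP (fun _ => (0:ℝ)) :=
  (PP.of_polyFun 0).congr (by simp)

lemma PP.add {g1 g2 : ℝ → ℝ} (h1 : PP g1) (h2 : PP g2) : PP (fun x => g1 x + g2 x) := by
  obtain ⟨B1, P1, he1, hc1⟩ := h1
  obtain ⟨B2, P2, he2, hc2⟩ := h2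
  refine ⟨B1 ∪ B2, fun x => P1 x + P2 x, fun x => by simp [he1, he2], fun x y h => ?_⟩
  show P1 x + P2 x = P1 y + P2 y
  rw [hc1 x y fun b hb => h b (Finset.mem_union_left _ hb),
    hc2 x y fun b hb => h b (Finset.mem_union_right _ hb)]

lemma PP.neg {g1 : ℝ → ℝ} (h1 : PP g1) : PP (fun x => -(g1 x)) := by
  obtain ⟨B1, P1, he1, hc1⟩ := h1
  refine ⟨B1, fun x => -(P1 x), fun x => by simp [he1], fun x y h => ?_⟩
  show -(P1 x) = -(P1 y)
  rw [hc1 x y h]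

lemma PP.sub {g1 g2 : ℝ → ℝ} (h1 : PP g1) (h2 : PP g2) : PP (fun x => g1 x - g2 x) :=
  (h1.add h2.neg).congr (by simp [sub_eq_add_neg])

lemma PP.finsetSum {ι : Type*} (s : Finset ι) (g : ι → ℝ → ℝ) (h : ∀ i ∈ s, PP (g i)) :
    PP (fun x => ∑ i ∈ s, g i x) := by
  classical
  induction s using Finset.induction_on with
  | empty => exact PP.zero.congr (by simp)
  | insert a s hni ih =>
    exact ((h a (Finset.mem_insert_self a s)).add
      (ih fun i hi => h i (Finset.mem_insert_of_mem hi))).congr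
      (fun x => by rw [Finset.sum_insert hni])

lemma PP.comp (Q : Polynomial (Polynomial ℝ)) {w : ℝ → ℝ} (hw : PP w) :
    PP (fun x => (Q.map (evalRingHom x)).eval (w x)) := by
  obtain ⟨B, P, he, hc⟩ := hw
  refine ⟨B, fun x => Q.eval (P x), fun x => ?_, fun x y h => ?_⟩
  · show (Q.map (evalRingHom x)).eval (w x) = (Q.eval (P x)).eval x
    rw [he x]
    have h2 : (Q.eval (P x)).eval x = (evalRingHom x) (Polynomial.eval₂ (RingHom.id _) (P x) Q) := rfl
    rw [h2, Polynomial.hom_eval₂, RingHom.comp_id, ← Polynomial.eval_map]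
    rfl
  · show Q.eval (P x) = Q.eval (P y)
    rw [hc x y h]

noncomputable def repSet (B0 : Finset ℝ) : Finset ℝ :=
  insert 0 ((B0.image (· + 1)) ∪ (B0.image (· - 1)) ∪ ((B0 ×ˢ B0).image fun p => (p.1 + p.2)/2))

lemma exists_rep (B0 : Finset ℝ) (x : ℝ) (hx : x ∉ B0) :
    ∃ t ∈ repSet B0, ∀ b ∈ B0, b ∉ Set.uIcc x t := by
  classical
  by_cases hlo : ∃ b ∈ B0, b < x
  case pos =>
    have hs1 : (B0.filter (fun b => b < x)).Nonempty := by
      obtain ⟨b, hb, hbx⟩ := hlo; exact ⟨b, Finset.mem_filter.2 ⟨hb, hbx⟩⟩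
    obtain haB := Finset.mem_filter.1 ((B0.filter (fun b => b < x)).max'_mem hs1)
    set a := (B0.filter (fun b => b < x)).max' hs1 with ha
    have hmax : ∀ b ∈ B0, b < x → b ≤ a :=
      fun b hb h' => Finset.le_max' _ b (show b ∈ B0.filter (fun y => y < x) from Finset.mem_filter.2 ⟨hb, h'⟩)
    by_cases hhi : ∃ b ∈ B0, x < b
    case pos =>
      have hs2 : (B0.filter (fun b => x < b)).Nonempty := by
        obtain ⟨b, hb, hbx⟩ := hhi; exact ⟨b, Finset.mem_filter.2 ⟨hb, hbx⟩⟩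
      obtain hcB := Finset.mem_filter.1 ((B0.filter (fun b => x < b)).min'_mem hs2)
      set c := (B0.filter (fun b => x < b)).min' hs2 with hc
      have hmin : ∀ b ∈ B0, x < b → c ≤ b :=
        fun b hb h' => Finset.min'_le _ b (show b ∈ B0.filter (fun y => x < y) from Finset.mem_filter.2 ⟨hb, h'⟩)
      refine ⟨(a + c)/2, ?_, ?_⟩
      · refine Finset.mem_insert_of_mem (Finset.mem_union_right _ ?_)
        exact Finset.mem_image.2 ⟨(a, c), Finset.mem_product.2 ⟨haB.1, hcB.1⟩, rfl⟩
      · intro b hb hmem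
        rcases lt_trichotomy b x with h' | h' | h'
        · have hba := hmax b hb h'
          rcases Set.mem_uIcc.1 hmem with ⟨h1, h2⟩ | ⟨h1, h2⟩ <;>
            linarith [haB.2, hcB.2]
        · exact hx (h' ▸ hb)
        · have hcb := hmin b hb h'
          rcases Set.mem_uIcc.1 hmem with ⟨h1, h2⟩ | ⟨h1, h2⟩ <;>
            linarith [haB.2, hcB.2]
    case neg =>
      refine ⟨a + 1, Finset.mem_insert_of_mem (Finset.mem_union_left _ (Finset.mem_union_left _
          (Finset.mem_image.2 ⟨a, haB.1, rfl⟩))), ?_⟩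
      intro b hb hmem
      have hba : b ≤ a := by
        rcases lt_trichotomy b x with h' | h' | h'
        · exact hmax b hb h'
        · exact absurd (h' ▸ hb) hx
        · exact absurd ⟨b, hb, h'⟩ hhi
      rcases Set.mem_uIcc.1 hmem with ⟨h1, h2⟩ | ⟨h1, h2⟩ <;> linarith [haB.2]
  case neg =>
    by_cases hhi : ∃ b ∈ B0, x < b
    case pos =>
      have hs2 : (B0.filter (fun b => x < b)).Nonempty := by
        obtain ⟨b, hb, hbx⟩ := hhi; exact ⟨b, Finset.mem_filter.2 ⟨hb, hbx⟩⟩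
      obtain hcB := Finset.mem_filter.1 ((B0.filter (fun b => x < b)).min'_mem hs2)
      set c := (B0.filter (fun b => x < b)).min' hs2 with hc
      have hmin : ∀ b ∈ B0, x < b → c ≤ b :=
        fun b hb h' => Finset.min'_le _ b (show b ∈ B0.filter (fun y => x < y) from Finset.mem_filter.2 ⟨hb, h'⟩)
      refine ⟨c - 1, Finset.mem_insert_of_mem (Finset.mem_union_left _ (Finset.mem_union_right _
          (Finset.mem_image.2 ⟨c, hcB.1, rfl⟩))), ?_⟩
      intro b hb hmem
      have hcb : c ≤ b := by
        rcases lt_trichotomy b x with h' | h' | h'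
        · exact absurd ⟨b, hb, h'⟩ hlo
        · exact absurd (h' ▸ hb) hx
        · exact hmin b hb h'
      rcases Set.mem_uIcc.1 hmem with ⟨h1, h2⟩ | ⟨h1, h2⟩ <;> linarith [hcB.2]
    case neg =>
      refine ⟨0, Finset.mem_insert_self _ _, fun b hb _ => ?_⟩
      exfalso
      rcases lt_trichotomy b x with h' | h' | h'
      · exact hlo ⟨b, hb, h'⟩
      · exact hx (h' ▸ hb)
      · exact hhi ⟨b, hb, h'⟩

lemma PP.max {g1 g2 : ℝ → ℝ} (h1 : PP g1) (h2 : PP g2) : PP (fun x => max (g1 x) (g2 x)) := by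
  classical
  obtain ⟨B1, P1, he1, hc1⟩ := h1
  obtain ⟨B2, P2, he2, hc2⟩ := h2
  set B0 : Finset ℝ := B1 ∪ B2 with hB0
  set R : Finset ℝ := (repSet B0).biUnion (fun t =>
    if h : P1 t - P2 t = 0 then ∅ else (P1 t - P2 t).roots.toFinset) with hR
  refine ⟨B0 ∪ R, fun x => if g2 x ≤ g1 x then P1 x else P2 x, fun x => ?_, ?_⟩
  · by_cases h : g2 x ≤ g1 x
    · simp only [h, if_true, max_eq_left h]; exact he1 x
    · simp only [h, if_false, max_eq_right (le_of_not_ge h)]; exact he2 x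
  intro x y hB
  have hB1 : ∀ b ∈ B1, b ∉ Set.uIcc x y := fun b hb =>
    hB b (Finset.mem_union_left _ (Finset.mem_union_left _ hb))
  have hB2 : ∀ b ∈ B2, b ∉ Set.uIcc x y := fun b hb =>
    hB b (Finset.mem_union_left _ (Finset.mem_union_right _ hb))
  have key : ∀ u v : ℝ, (∀ b ∈ B0 ∪ R, b ∉ Set.uIcc u v) →
      g2 u ≤ g1 u → g1 v < g2 v → False := by
    intro u v h hu hv
    set d := P1 u - P2 u with hd
    have heval : ∀ t ∈ Set.uIcc u v, d.eval t = g1 t - g2 t := by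
      intro t ht
      have hsub : Set.uIcc u t ⊆ Set.uIcc u v :=
        Set.uIcc_subset_uIcc Set.left_mem_uIcc ht
      have e1 : P1 u = P1 t := hc1 u t fun b hb hmem =>
        h b (Finset.mem_union_left _ (Finset.mem_union_left _ hb)) (hsub hmem)
      have e2 : P2 u = P2 t := hc2 u t fun b hb hmem =>
        h b (Finset.mem_union_left _ (Finset.mem_union_right _ hb)) (hsub hmem)
      rw [hd, Polynomial.eval_sub, e1, e2, ← he1 t, ← he2 t]
    have h0 : (0:ℝ) ∈ Set.uIcc (d.eval u) (d.eval v) := by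
      rw [heval u Set.left_mem_uIcc, heval v Set.right_mem_uIcc]
      exact Set.mem_uIcc.2 (Or.inr ⟨by linarith, by linarith⟩)
    obtain ⟨r, hr, hr0⟩ := intermediate_value_uIcc
      (Continuous.continuousOn (d.continuous)) h0
    have hdne : d ≠ 0 := by
      intro h0'
      have := heval v Set.right_mem_uIcc
      rw [h0'] at this
      simp at this
      linarith
    have hu0 : u ∉ B0 := fun h' =>
      h u (Finset.mem_union_left _ h') Set.left_mem_uIcc
    obtain ⟨t0, ht0, hrep⟩ := exists_rep B0 u hu0
    have e1 : P1 u = P1 t0 := hc1 u t0 fun b hb hmem =>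
      hrep b (Finset.mem_union_left _ hb) hmem
    have e2 : P2 u = P2 t0 := hc2 u t0 fun b hb hmem =>
      hrep b (Finset.mem_union_right _ hb) hmem
    have hdt0 : P1 t0 - P2 t0 = d := by rw [hd, e1, e2]
    have hrR : r ∈ R := by
      rw [hR]
      refine Finset.mem_biUnion.2 ⟨t0, ht0, ?_⟩
      rw [hdt0, dif_neg hdne]
      rw [Multiset.mem_toFinset, Polynomial.mem_roots hdne]
      exact hr0
    exact h r (Finset.mem_union_right _ hrR) hr
  by_cases c1 : g2 x ≤ g1 x <;> by_cases c2 : g2 y ≤ g1 y <;>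
    simp only [c1, c2, if_true, if_false]
  · exact hc1 x y hB1
  · exact absurd (key x y hB c1 (lt_of_not_ge c2)) not_false
  · refine absurd (key y x (fun b hb hmem => hB b hb (by rwa [Set.uIcc_comm] at hmem))
      c2 (lt_of_not_ge c1)) not_false
  · exact hc2 x y hB2

lemma PP.min {g1 g2 : ℝ → ℝ} (h1 : PP g1) (h2 : PP g2) : PP (fun x => min (g1 x) (g2 x)) := by
  refine ((h1.add h2).sub (h1.max h2)).congr fun x => ?_
  have := min_add_max (g1 x) (g2 x)
  linarith

noncomputable def psiH : MvPolynomial (Fin 1) ℝ →+* Polynomial ℝ :=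
  (Polynomial.mapRingHom (MvPolynomial.eval (isEmptyElim : Fin 0 → ℝ))).comp
    (MvPolynomial.finSuccEquiv ℝ 0 : MvPolynomial (Fin 1) ℝ →+* Polynomial (MvPolynomial (Fin 0) ℝ))

lemma psiH_eval (r : MvPolynomial (Fin 1) ℝ) (x : ℝ) :
    (psiH r).eval x = MvPolynomial.eval ![x] r := by
  have h1 : (![x] : Fin 1 → ℝ) = Fin.cons x (isEmptyElim : Fin 0 → ℝ) := by
    funext i
    fin_cases i
    rfl
  rw [h1, MvPolynomial.eval_eq_eval_mv_eval']
  rfl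

noncomputable def toBiv (p : MvPolynomial (Fin 2) ℝ) : Polynomial (Polynomial ℝ) :=
  ((MvPolynomial.finSuccEquiv ℝ 1) (MvPolynomial.rename (Equiv.swap 0 1) p)).map psiH

lemma evalBiv (p : MvPolynomial (Fin 2) ℝ) (x y : ℝ) :
    MvPolynomial.eval ![x, y] p = ((toBiv p).map (evalRingHom x)).eval y := by
  have hfun : (![y, x] ∘ (Equiv.swap (0:Fin 2) 1) : Fin 2 → ℝ) = ![x, y] := by
    funext i
    fin_cases i <;> simp [Equiv.swap_apply_left, Equiv.swap_apply_right]
  have h1 : MvPolynomial.eval ![x, y] p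
      = MvPolynomial.eval ![y, x] (MvPolynomial.rename (Equiv.swap 0 1) p) := by
    rw [MvPolynomial.eval_rename, hfun]
  have h2 : (![y, x] : Fin 2 → ℝ) = Fin.cons y ![x] := by
    funext i
    fin_cases i <;> rfl
  have heq : (MvPolynomial.eval (![x]) : MvPolynomial (Fin 1) ℝ →+* ℝ)
      = (evalRingHom x).comp psiH := by
    refine RingHom.ext fun r => ?_
    show MvPolynomial.eval ![x] r = (psiH r).eval x
    rw [psiH_eval]
  rw [h1, h2, MvPolynomial.eval_eq_eval_mv_eval', toBiv, Polynomial.map_map, heq]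

lemma integral_Ioo_poly (q : Polynomial ℝ) (a b : ℝ) :
    ∫ y in Set.Ioo a b, q.eval y = (pintA q).eval (max a b) - (pintA q).eval a := by
  rcases le_total a b with h | h
  · rw [max_eq_right h, ← integral_pintA, intervalIntegral.integral_of_le h,
      integral_Ioc_eq_integral_Ioo]
  · rw [Set.Ioo_eq_empty (not_lt.2 h), max_eq_left h]
    simp

lemma PP_inter_integral (Ik : Set ℝ) (hIk : Ik.OrdConnected) (pk : MvPolynomial (Fin 2) ℝ)
    (α β γ δ : ℝ) :
    PP (fun x => ∫ y in Set.Icc (α*x+β) (γ*x+δ) ∩ Ik, MvPolynomial.eval ![x, y] pk) := by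
  classical
  rcases Ik.eq_empty_or_nonempty with rfl | hne
  · exact PP.zero.congr (by simp)
  set L : ℝ → ℝ := fun x => if BddBelow Ik then max (α*x+β) (sInf Ik) else α*x+β with hL
  set U : ℝ → ℝ := fun x => if BddAbove Ik then min (γ*x+δ) (sSup Ik) else γ*x+δ with hU
  have affPP : ∀ c d : ℝ, PP (fun x => c*x+d) := fun c d =>
    (PP.of_polyFun (C c * X + C d)).congr (fun x => by simp)
  have constPP : ∀ c : ℝ, PP (fun _ => c) := fun c =>
    (PP.of_polyFun (C c)).congr (fun x => by simp)
  have hPPL : PP L := by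
    by_cases hb : BddBelow Ik
    · simp only [hL, hb, if_true]; exact (affPP α β).max (constPP _)
    · simp only [hL, hb, if_false]; exact affPP α β
  have hPPU : PP U := by
    by_cases hb : BddAbove Ik
    · simp only [hU, hb, if_true]; exact (affPP γ δ).min (constPP _)
    · simp only [hU, hb, if_false]; exact affPP γ δ
  have hsub1 : ∀ x, Set.Icc (α*x+β) (γ*x+δ) ∩ Ik ⊆ Set.Icc (L x) (U x) := by
    intro x y hy
    obtain ⟨⟨h1, h2⟩, hyI⟩ := hy
    constructor
    · simp only [hL]; split_ifs with hb
      · exact max_le h1 (csInf_le hb hyI)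
      · exact h1
    · simp only [hU]; split_ifs with hb
      · exact le_min h2 (le_csSup hb hyI)
      · exact h2
  have hsub2 : ∀ x, Set.Ioo (L x) (U x) ⊆ Set.Icc (α*x+β) (γ*x+δ) ∩ Ik := by
    intro x y hy
    obtain ⟨h1, h2⟩ := hy
    have hll : α*x+β ≤ L x := by
      simp only [hL]; split_ifs
      exacts [le_max_left _ _, le_rfl]
    have huu : U x ≤ γ*x+δ := by
      simp only [hU]; split_ifs
      exacts [min_le_left _ _, le_rfl]
    refine ⟨⟨by linarith, by linarith⟩, ?_⟩
    obtain ⟨z1, hz1, hz1y⟩ : ∃ z ∈ Ik, z < y := by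
      by_cases hb : BddBelow Ik
      · refine exists_lt_of_csInf_lt hne ?_
        have : sInf Ik ≤ L x := by simp only [hL, hb, if_true]; exact le_max_right _ _
        linarith
      · exact not_bddBelow_iff.1 hb y
    obtain ⟨z2, hz2, hyz2⟩ : ∃ z ∈ Ik, y < z := by
      by_cases hb : BddAbove Ik
      · refine exists_lt_of_lt_csSup hne ?_
        have : U x ≤ sSup Ik := by simp only [hU, hb, if_true]; exact min_le_right _ _
        linarith
      · exact not_bddAbove_iff.1 hb y
    exact hIk.out hz1 hz2 ⟨le_of_lt hz1y, le_of_lt hyz2⟩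
  set Q := pintA (toBiv pk) with hQ
  have hval : ∀ x, (∫ y in Set.Icc (α*x+β) (γ*x+δ) ∩ Ik, MvPolynomial.eval ![x, y] pk)
      = (Q.map (evalRingHom x)).eval (max (L x) (U x)) - (Q.map (evalRingHom x)).eval (L x) := by
    intro x
    set qx := (toBiv pk).map (evalRingHom x) with hqx
    have hmap : Q.map (evalRingHom x) = pintA qx := by
      rw [hQ, hqx]
      have hmp := map_pintA (Polynomial.aeval x : Polynomial ℝ →ₐ[ℝ] ℝ) (toBiv pk)
      have hco : ((Polynomial.aeval x : Polynomial ℝ →ₐ[ℝ] ℝ) : Polynomial ℝ →+* ℝ)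
          = evalRingHom x := by ext <;> simp
      rw [hco] at hmp
      exact hmp
    have hSae : (Set.Icc (α*x+β) (γ*x+δ) ∩ Ik : Set ℝ) =ᵐ[volume] Set.Ioo (L x) (U x) := by
      rw [MeasureTheory.ae_eq_set]
      constructor
      · refine measure_mono_null (fun y hy => ?_)
          (show volume ({L x, U x} : Set ℝ) = 0 by
            have : ({L x, U x} : Set ℝ).Countable :=
              ((Set.finite_singleton (U x)).insert (L x)).countable
            exact this.measure_zero _)
        obtain ⟨hyS, hyn⟩ := hy
        have hyIcc := hsub1 x hyS
        rcases eq_or_lt_of_le hyIcc.1 with h' | h'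
        · exact Set.mem_insert_iff.2 (Or.inl h'.symm)
        rcases eq_or_lt_of_le hyIcc.2 with h'' | h''
        · exact Set.mem_insert_iff.2 (Or.inr h'')
        · exact absurd ⟨h', h''⟩ hyn
      · rw [Set.diff_eq_empty.2 (hsub2 x)]
        simp
    rw [setIntegral_congr_set hSae]
    have hev : ∀ y : ℝ, MvPolynomial.eval ![x, y] pk = qx.eval y := fun y => evalBiv pk x y
    simp only [hev]
    rw [integral_Ioo_poly, hmap]
  exact ((PP.comp Q (hPPL.max hPPU)).sub (PP.comp Q hPPL)).congr fun x => (hval x).symm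

/-- Proposition 5 (polynomial weights): integrating a bivariate piecewise
polynomial `f(x, y) = ∑_k 1_{I_k}(y)·p_k(x, y)` (with `I_k` pairwise disjoint
intervals) over `y ∈ [ℓ(x), u(x)]` with affine bounds `ℓ(x) = αx + β`,
`u(x) = γx + δ` yields a univariate piecewise polynomial function of `x`. -/
theorem stmt11 (m : ℕ) (I : Fin m → Set ℝ)
    (hI : ∀ k, (I k).OrdConnected)
    (hdisj : Pairwise (Function.onFun Disjoint I))
    (p : Fin m → MvPolynomial (Fin 2) ℝ) (α β γ δ : ℝ) :
    let f : ℝ → ℝ → ℝ := fun x y =>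
      ∑ k, Set.indicator (I k) (fun y => MvPolynomial.eval ![x, y] (p k)) y
    let g : ℝ → ℝ := fun x =>
      ∫ y, Set.indicator (Set.Icc (α * x + β) (γ * x + δ)) (f x) y ∂volume
    ∃ B : Finset ℝ, IsPiecewisePolyOn g B := by
  intro f g
  suffices h : PP g by
    obtain ⟨B, hB⟩ := h
    exact ⟨B, hB⟩
  have hmeas : ∀ (k : Fin m) (x : ℝ),
      MeasurableSet (Set.Icc (α*x+β) (γ*x+δ) ∩ I k) :=
    fun k x => measurableSet_Icc.inter (hI k).measurableSet
  have hcont : ∀ (k : Fin m) (x : ℝ), Continuous fun y => MvPolynomial.eval ![x, y] (p k) := by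
    intro k x
    have : (fun y => MvPolynomial.eval ![x, y] (p k))
        = fun y => (((toBiv (p k)).map (evalRingHom x)).eval y) := funext fun y => evalBiv (p k) x y
    rw [this]
    exact Polynomial.continuous _
  have hint : ∀ (k : Fin m) (x : ℝ),
      Integrable (Set.indicator (Set.Icc (α*x+β) (γ*x+δ) ∩ I k)
        (fun y => MvPolynomial.eval ![x, y] (p k))) volume := by
    intro k x
    refine IntegrableOn.integrable_indicator ?_ (hmeas k x)
    exact ((hcont k x).integrableOn_Icc).mono_set Set.inter_subset_left
  have hg : ∀ x, g x = ∑ k, ∫ y in Set.Icc (α*x+β) (γ*x+δ) ∩ I k,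
      MvPolynomial.eval ![x, y] (p k) := by
    intro x
    have hptw : ∀ y, Set.indicator (Set.Icc (α * x + β) (γ * x + δ)) (f x) y
        = ∑ k, Set.indicator (Set.Icc (α*x+β) (γ*x+δ) ∩ I k)
            (fun y => MvPolynomial.eval ![x, y] (p k)) y := by
      intro y
      by_cases hy : y ∈ Set.Icc (α * x + β) (γ * x + δ)
      · rw [Set.indicator_of_mem hy]
        show f x y = _
        refine Finset.sum_congr rfl fun k _ => ?_
        rw [← Set.indicator_indicator, Set.indicator_of_mem hy]
      · rw [Set.indicator_of_notMem hy]
        symm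
        refine Finset.sum_eq_zero fun k _ => ?_
        rw [← Set.indicator_indicator, Set.indicator_of_notMem hy]
    show (∫ y, Set.indicator (Set.Icc (α * x + β) (γ * x + δ)) (f x) y ∂volume) = _
    rw [integral_congr_ae (Filter.Eventually.of_forall hptw),
      integral_finset_sum _ (fun k _ => hint k x)]
    exact Finset.sum_congr rfl fun k _ => integral_indicator (hmeas k x)
  exact (PP.finsetSum Finset.univ
    (fun k x => ∫ y in Set.Icc (α*x+β) (γ*x+δ) ∩ I k, MvPolynomial.eval ![x, y] (p k))
    (fun k _ => PP_inter_integral (I k) (hI k) (p k) α β γ δ)).congr fun x => (hg x).symm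
end

section
/- Let f(x, y) be a polynomial and ℓ(x) = αx + β, u(x) = γx + δ affine maps. Then the degree of the polynomial g(x) = ∫_{ℓ(x)}^{u(x)} f(x, y) dy satisfies deg g ≤ deg f + 1. -/
open MeasureTheory

/-- Degree growth under integration with affine bounds: for a bivariate
polynomial `f` of total degree `deg f` and affine bounds `ℓ(x) = αx + β`,
`u(x) = γx + δ`, the univariate polynomial
`g(x) = ∫_{ℓ(x)}^{u(x)} f(x, y) dy` has degree at most `deg f + 1`. -/
theorem stmt13 (f : MvPolynomial (Fin 2) ℝ) (α β γ δ : ℝ) :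
    ∃ g : Polynomial ℝ,
      (∀ x : ℝ,
        (∫ y in (α * x + β)..(γ * x + δ), MvPolynomial.eval ![x, y] f) =
          g.eval x) ∧
      g.natDegree ≤ f.totalDegree + 1 := by
  classical
  refine ⟨∑ d ∈ f.support,
    Polynomial.C (MvPolynomial.coeff d f * (1 / (d 1 + 1 : ℝ))) *
      Polynomial.X ^ (d 0) *
      ((Polynomial.C γ * Polynomial.X + Polynomial.C δ) ^ (d 1 + 1) -
       (Polynomial.C α * Polynomial.X + Polynomial.C β) ^ (d 1 + 1)), ?_, ?_⟩
  · intro x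
    have heval : ∀ y : ℝ, MvPolynomial.eval ![x, y] f =
        ∑ d ∈ f.support, MvPolynomial.coeff d f * x ^ (d 0) * y ^ (d 1) := by
      intro y
      rw [MvPolynomial.eval_eq']
      refine Finset.sum_congr rfl fun d _ => ?_
      rw [Fin.prod_univ_two]
      simp [mul_assoc]
    simp only [heval]
    rw [intervalIntegral.integral_finset_sum]
    · rw [Polynomial.eval_finset_sum]
      refine Finset.sum_congr rfl fun d _ => ?_
      rw [intervalIntegral.integral_const_mul, integral_pow]
      simp only [Polynomial.eval_mul, Polynomial.eval_C, Polynomial.eval_pow,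
        Polynomial.eval_X, Polynomial.eval_sub, Polynomial.eval_add]
      have hd : ((d 1 : ℝ) + 1) ≠ 0 := by positivity
      field_simp
    · intro d _
      exact (Continuous.intervalIntegrable (by continuity) _ _)
  · refine Polynomial.natDegree_sum_le_of_forall_le _ _ fun d hd => ?_
    have hd2 : d 0 + d 1 ≤ f.totalDegree := by
      have := MvPolynomial.le_totalDegree (R := ℝ) (s := d) hd
      rwa [Finsupp.sum_fintype _ _ (fun _ => rfl), Fin.sum_univ_two] at this
    calc (Polynomial.C (MvPolynomial.coeff d f * (1 / (d 1 + 1 : ℝ))) *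
      Polynomial.X ^ (d 0) *
      ((Polynomial.C γ * Polynomial.X + Polynomial.C δ) ^ (d 1 + 1) -
       (Polynomial.C α * Polynomial.X + Polynomial.C β) ^ (d 1 + 1))).natDegree
        ≤ 0 + d 0 + (d 1 + 1) := by
          have hP : ∀ a b : ℝ,
              ((Polynomial.C a * Polynomial.X + Polynomial.C b) ^ (d 1 + 1)).natDegree
                ≤ d 1 + 1 := by
            intro a b
            refine Polynomial.natDegree_pow_le.trans ?_
            have h1 : (Polynomial.C a * Polynomial.X + Polynomial.C b).natDegree ≤ 1 := by
              compute_degree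
            calc (d 1 + 1) * (Polynomial.C a * Polynomial.X + Polynomial.C b).natDegree
                ≤ (d 1 + 1) * 1 := Nat.mul_le_mul_left _ h1
              _ = d 1 + 1 := by omega
          refine Polynomial.natDegree_mul_le.trans (add_le_add
            (Polynomial.natDegree_mul_le.trans (add_le_add
              (Polynomial.natDegree_C _).le (Polynomial.natDegree_X_pow _).le))
            ((Polynomial.natDegree_sub_le _ _).trans (max_le (hP γ δ) (hP α β))))
      _ ≤ f.totalDegree + 1 := by omega
end

section
/- Let T be a finite tree and suppose each edge {i, j} carries a nonnegative measurable bivariate kernel Φ_{ij}(x_i, x_j) and each vertex i a nonnegative measurable univariate factor Φ_i(x_i), with p(x) = ∏_i Φ_i(x_i) · ∏_{{i,j} ∈ E} Φ_{ij}(x_i, x_j). Define messages recursively from the leaves: m_{j→i}(x_i) = ∫ Φ_{ij}(x_i, x_j)·Φ_j(x_j)·∏_{k ∈ neigh(j)∖{i}} m_{k→j}(x_j) d x_j. Then for every vertex i, ∫ p(x) dx = ∫ Φ_i(x_i) · ∏_{j ∈ neigh(i)} m_{j→i}(x_i) d x_i, assuming all integrals are finite (e.g., all factors are bounded with compact support).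 -/
open MeasureTheory Finset SimpleGraph
open scoped Classical ENNReal

variable {n : ℕ}

/-- The set of vertices on the `j`-side of the edge `{j,i}`. -/
noncomputable def bpS (G : SimpleGraph (Fin n)) (j i : Fin n) : Finset (Fin n) :=
  Finset.univ.filter fun k => (G.deleteEdges {s(j, i)}).Reachable j k

lemma mem_bpS {G : SimpleGraph (Fin n)} {j i x : Fin n} :
    x ∈ bpS G j i ↔ (G.deleteEdges {s(j, i)}).Reachable j x := by simp [bpS]

lemma bpS_self (G : SimpleGraph (Fin n)) (j i : Fin n) : j ∈ bpS G j i :=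
  mem_bpS.2 (SimpleGraph.Reachable.refl j)

lemma bp_not_reach {G : SimpleGraph (Fin n)} (hT : G.IsTree) {j i : Fin n} (h : G.Adj j i) :
    ¬ (G.deleteEdges {s(j, i)}).Reachable j i :=
  ((isBridge_iff).mp ((isAcyclic_iff_forall_adj_isBridge.mp hT.2) h))

lemma bp_not_mem_bpS {G : SimpleGraph (Fin n)} (hT : G.IsTree) {j i : Fin n} (h : G.Adj j i) :
    i ∉ bpS G j i := fun hi => bp_not_reach hT h (mem_bpS.1 hi)

/-- any walk in the deleted graph starting at `k` avoids `j`. -/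
lemma bp_support_avoid {G : SimpleGraph (Fin n)} (hT : G.IsTree) {k j x : Fin n}
    (h : G.Adj k j) (w : (G.deleteEdges {s(k, j)}).Walk k x) : j ∉ w.support := by
  intro hj
  exact bp_not_reach hT h ⟨w.takeUntil j hj⟩

/-- closure: a neighbor (≠ j) of a vertex of `bpS G k j` is in `bpS G k j`. -/
lemma bp_closure {G : SimpleGraph (Fin n)} (hT : G.IsTree) {k j a b : Fin n}
    (h : G.Adj k j) (ha : a ∈ bpS G k j) (hab : G.Adj a b) (hb : b ≠ j) :
    b ∈ bpS G k j := by
  refine mem_bpS.2 ((mem_bpS.1 ha).trans (SimpleGraph.Adj.reachable ?_))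
  rw [SimpleGraph.deleteEdges_adj]
  refine ⟨hab, ?_⟩
  intro hmem
  rw [Set.mem_singleton_iff, Sym2.eq_iff] at hmem
  rcases hmem with ⟨h1, h2⟩ | ⟨h1, h2⟩
  · exact hb h2
  · exact bp_not_mem_bpS hT h (h1 ▸ ha)

lemma bpS_subset {G : SimpleGraph (Fin n)} (hT : G.IsTree) {j i k : Fin n}
    (hji : G.Adj j i) (hkj : G.Adj k j) (hki : k ≠ i) :
    bpS G k j ⊆ bpS G j i := by
  intro x hx
  obtain ⟨w⟩ := mem_bpS.1 hx
  have hjw : j ∉ w.support := bp_support_avoid hT hkj w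
  have hedges : ∀ e ∈ w.edges, e ∈ (G.deleteEdges {s(j, i)}).edgeSet := by
    intro e he
    have h1 := w.edges_subset_edgeSet he
    rw [SimpleGraph.edgeSet_deleteEdges] at h1 ⊢
    refine ⟨h1.1, ?_⟩
    intro hmem
    rw [Set.mem_singleton_iff] at hmem
    subst hmem
    exact hjw (w.fst_mem_support_of_mem_edges he)
  have w' := w.transfer _ hedges
  have hjk : (G.deleteEdges {s(j, i)}).Adj j k := by
    rw [SimpleGraph.deleteEdges_adj]
    refine ⟨hkj.symm, ?_⟩
    intro hmem
    rw [Set.mem_singleton_iff, Sym2.eq_iff] at hmem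
    rcases hmem with ⟨h1, h2⟩ | ⟨h1, h2⟩
    · exact hki h2
    · exact G.irrefl (h2 ▸ hkj)
  exact mem_bpS.2 (hjk.reachable.trans ⟨w'⟩)

lemma bpS_sides_disjoint {G : SimpleGraph (Fin n)} (hT : G.IsTree) {j i : Fin n}
    (hji : G.Adj j i) : Disjoint (bpS G j i) (bpS G i j) := by
  rw [Finset.disjoint_left]
  intro x hx hx'
  rw [mem_bpS] at hx hx'
  rw [Sym2.eq_swap] at hx'
  exact bp_not_reach hT hji (hx.trans hx'.symm)

/-- cover lemma: every vertex other than `j` lies behind some neighbor of `j`. -/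
lemma bp_cover {G : SimpleGraph (Fin n)} (hT : G.IsTree) {j x : Fin n} (hx : x ≠ j) :
    ∃ k, G.Adj k j ∧ x ∈ bpS G k j := by
  obtain ⟨w⟩ := hT.1.preconnected j x
  obtain ⟨q, hq⟩ := w.toPath
  cases q with
  | nil => exact absurd rfl hx.symm
  | @cons _ k _ h q =>
    rw [SimpleGraph.Walk.cons_isPath_iff] at hq
    refine ⟨k, h.symm, mem_bpS.2 ?_⟩
    have hedges : ∀ e ∈ q.edges, e ∈ (G.deleteEdges {s(k, j)}).edgeSet := by
      intro e he
      rw [SimpleGraph.edgeSet_deleteEdges]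
      refine ⟨q.edges_subset_edgeSet he, ?_⟩
      intro hmem
      rw [Set.mem_singleton_iff] at hmem
      subst hmem
      exact hq.2 (q.snd_mem_support_of_mem_edges he)
    exact ⟨q.transfer _ hedges⟩

lemma bp_cover_edge {G : SimpleGraph (Fin n)} (hT : G.IsTree) {j i x : Fin n}
    (hji : G.Adj j i) (hx : x ∈ bpS G j i) (hxj : x ≠ j) :
    ∃ k, G.Adj k j ∧ k ≠ i ∧ x ∈ bpS G k j := by
  obtain ⟨k, hk, hxk⟩ := bp_cover hT hxj
  refine ⟨k, hk, ?_, hxk⟩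
  rintro rfl
  exact (Finset.disjoint_left.1 (bpS_sides_disjoint hT hji)) hx hxk

lemma bp_siblings_disjoint {G : SimpleGraph (Fin n)} (hT : G.IsTree) {j k k' : Fin n}
    (hk : G.Adj k j) (hk' : G.Adj k' j) (hkk' : k ≠ k') :
    Disjoint (bpS G k j) (bpS G k' j) := by
  rw [Finset.disjoint_left]
  intro x hx hx'
  obtain ⟨w1⟩ := mem_bpS.1 hx
  obtain ⟨w2⟩ := mem_bpS.1 hx'
  obtain ⟨p1, hp1⟩ := w1.toPath
  obtain ⟨p2, hp2⟩ := w2.toPath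
  have hj1 : j ∉ p1.support := bp_support_avoid hT hk p1
  have hj2 : j ∉ p2.support := bp_support_avoid hT hk' p2
  let q1 : G.Walk k x := p1.mapLe (G.deleteEdges_le _)
  let q2 : G.Walk k' x := p2.mapLe (G.deleteEdges_le _)
  have hq1 : q1.IsPath := hp1.mapLe _
  have hq2 : q2.IsPath := hp2.mapLe _
  have hjq1 : j ∉ q1.support := by
    simpa [q1, SimpleGraph.Walk.support_map] using hj1
  have hjq2 : j ∉ q2.support := by
    simpa [q2, SimpleGraph.Walk.support_map] using hj2
  let W1 : G.Walk j x := SimpleGraph.Walk.cons hk.symm q1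
  let W2 : G.Walk j x := SimpleGraph.Walk.cons hk'.symm q2
  have hW1 : W1.IsPath := by
    rw [SimpleGraph.Walk.cons_isPath_iff]; exact ⟨hq1, hjq1⟩
  have hW2 : W2.IsPath := by
    rw [SimpleGraph.Walk.cons_isPath_iff]; exact ⟨hq2, hjq2⟩
  obtain ⟨P, -, hup⟩ := hT.existsUnique_path j x
  have h12 : W1 = W2 := (hup W1 hW1).trans (hup W2 hW2).symm
  have hsup : W1.support = W2.support := by rw [h12]
  rw [show W1.support = j :: q1.support from rfl,
      show W2.support = j :: q2.support from rfl,
      q1.support_eq_cons, q2.support_eq_cons] at hsup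
  simp only [List.cons.injEq] at hsup
  exact hkk' hsup.2.1

lemma bpS_card_lt {G : SimpleGraph (Fin n)} (hT : G.IsTree) {j i k : Fin n}
    (hji : G.Adj j i) (hkj : G.Adj k j) (hki : k ≠ i) :
    (bpS G k j).card < (bpS G j i).card := by
  refine Finset.card_lt_card ⟨bpS_subset hT hji hkj hki, fun hsub => ?_⟩
  exact bp_not_mem_bpS hT hkj (hsub (bpS_self G j i))

/-- normalize an edge `{r,k}` to an ordered pair. -/
noncomputable def bpPr (r k : Fin n) : Fin n × Fin n := if r < k then (r, k) else (k, r)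

/-- the set of (ordered) edges of `G` inside the vertex set `A`. -/
noncomputable def bpD (G : SimpleGraph (Fin n)) (A : Finset (Fin n)) :
    Finset (Fin n × Fin n) :=
  (A ×ˢ A).filter fun q => q.1 < q.2 ∧ G.Adj q.1 q.2

lemma mem_bpD {G : SimpleGraph (Fin n)} {A : Finset (Fin n)} {q : Fin n × Fin n} :
    q ∈ bpD G A ↔ q.1 ∈ A ∧ q.2 ∈ A ∧ q.1 < q.2 ∧ G.Adj q.1 q.2 := by
  simp [bpD, Finset.mem_product, and_assoc]

/-- Hypotheses for decomposing the tree at vertex `r`, with ground set `T` and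
children `K`. -/
structure BPCtx (G : SimpleGraph (Fin n)) (r : Fin n) (T K : Finset (Fin n)) : Prop where
  htree : G.IsTree
  hrT : r ∈ T
  hadj : ∀ k ∈ K, G.Adj k r
  hsub : ∀ k ∈ K, bpS G k r ⊆ T
  hcov : ∀ x ∈ T, x ≠ r → ∃ k ∈ K, x ∈ bpS G k r
  hmemK : ∀ k, G.Adj k r → k ∈ T → k ∈ K

namespace BPCtx

variable {G : SimpleGraph (Fin n)} {r : Fin n} {T K : Finset (Fin n)} (hC : BPCtx G r T K)

include hC

lemma not_mem_S {k : Fin n} (hk : k ∈ K) : r ∉ bpS G k r :=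
  bp_not_mem_bpS hC.htree (hC.hadj k hk)

lemma not_mem_biUnion : r ∉ K.biUnion fun k => bpS G k r := by
  rw [Finset.mem_biUnion]
  rintro ⟨k, hk, hmem⟩
  exact hC.not_mem_S hk hmem

lemma S_pairwise_disjoint {k k' : Fin n} (hk : k ∈ K) (hk' : k' ∈ K) (hne : k ≠ k') :
    Disjoint (bpS G k r) (bpS G k' r) :=
  bp_siblings_disjoint hC.htree (hC.hadj k hk) (hC.hadj k' hk') hne

lemma T_eq : T = insert r (K.biUnion fun k => bpS G k r) := by
  ext x
  simp only [Finset.mem_insert, Finset.mem_biUnion]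
  constructor
  · intro hx
    by_cases hxr : x = r
    · exact Or.inl hxr
    · exact Or.inr (hC.hcov x hx hxr)
  · rintro (rfl | ⟨k, hk, hmem⟩)
    · exact hC.hrT
    · exact hC.hsub k hk hmem

lemma D_eq : bpD G T =
    (K.image fun k => bpPr r k) ∪ K.biUnion fun k => bpD G (bpS G k r) := by
  ext ⟨a, b⟩
  rw [Finset.mem_union, Finset.mem_image, Finset.mem_biUnion, mem_bpD]
  constructor
  · rintro ⟨ha, hb, hlt, hab⟩
    by_cases har : a = r
    · subst har
      refine Or.inl ⟨b, hC.hmemK b hab.symm hb, ?_⟩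
      simp only [bpPr, if_pos hlt]
    · by_cases hbr : b = r
      · subst hbr
        refine Or.inl ⟨a, hC.hmemK a hab ha, ?_⟩
        simp only [bpPr, if_neg (asymm hlt)]
      · obtain ⟨k, hk, hak⟩ := hC.hcov a ha har
        refine Or.inr ⟨k, hk, mem_bpD.2 ⟨hak, ?_, hlt, hab⟩⟩
        exact bp_closure hC.htree (hC.hadj k hk) hak hab hbr
  · rintro (⟨k, hk, hpr⟩ | ⟨k, hk, hq⟩)
    · have hadjk := hC.hadj k hk
      have hkT : k ∈ T := hC.hsub k hk (bpS_self G k r)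
      unfold bpPr at hpr
      split_ifs at hpr with h
      · obtain ⟨rfl, rfl⟩ := Prod.mk.injEq .. ▸ hpr
        exact ⟨hC.hrT, hkT, h, hadjk.symm⟩
      · obtain ⟨rfl, rfl⟩ := Prod.mk.injEq .. ▸ hpr
        exact ⟨hkT, hC.hrT, lt_of_le_of_ne (le_of_not_gt h) hadjk.ne, hadjk⟩
    · rw [mem_bpD] at hq
      exact ⟨hC.hsub k hk hq.1, hC.hsub k hk hq.2.1, hq.2.2⟩

lemma pr_injOn : Set.InjOn (fun k => bpPr r k) K := by
  intro k hk k' hk' he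
  have h1 : k ≠ r := (hC.hadj k hk).ne
  have h2 : k' ≠ r := (hC.hadj k' hk').ne
  simp only [bpPr] at he
  split_ifs at he with ha hb hb <;>
    simp only [Prod.mk.injEq] at he <;> omega

lemma image_disjoint_biUnion :
    Disjoint (K.image fun k => bpPr r k) (K.biUnion fun k => bpD G (bpS G k r)) := by
  rw [Finset.disjoint_left]
  rintro q hq hq'
  rw [Finset.mem_image] at hq
  obtain ⟨k, hk, rfl⟩ := hq
  rw [Finset.mem_biUnion] at hq'
  obtain ⟨k', hk', hmem⟩ := hq'
  rw [mem_bpD] at hmem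
  have hr : r ∉ bpS G k' r := hC.not_mem_S hk'
  unfold bpPr at hmem
  split_ifs at hmem
  · exact hr hmem.1
  · exact hr hmem.2.1

lemma D_pairwise_disjoint {k k' : Fin n} (hk : k ∈ K) (hk' : k' ∈ K) (hne : k ≠ k') :
    Disjoint (bpD G (bpS G k r)) (bpD G (bpS G k' r)) := by
  rw [Finset.disjoint_left]
  intro q hq hq'
  rw [mem_bpD] at hq hq'
  exact Finset.disjoint_left.1 (hC.S_pairwise_disjoint hk hk' hne) hq.1 hq'.1

end BPCtx

section Measures

variable {G : SimpleGraph (Fin n)} {Φv : Fin n → ℝ → ℝ} {Φe : Fin n → Fin n → ℝ → ℝ → ℝ}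

/-- edge factor in `ℝ≥0∞`. -/
noncomputable def bpEE (Φe : Fin n → Fin n → ℝ → ℝ → ℝ) (q : Fin n × Fin n)
    (x : Fin n → ℝ) : ℝ≥0∞ :=
  ENNReal.ofReal (Φe q.1 q.2 (x q.1) (x q.2))

/-- the joint factor of the subtree behind the directed edge `j → i`, including the
edge factor of `{i,j}` itself. -/
noncomputable def bpP (G : SimpleGraph (Fin n)) (Φv : Fin n → ℝ → ℝ)
    (Φe : Fin n → Fin n → ℝ → ℝ → ℝ) (j i : Fin n) : (Fin n → ℝ) → ℝ≥0∞ := fun x =>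
  ENNReal.ofReal (Φe i j (x i) (x j)) *
    ((∏ v ∈ bpS G j i, ENNReal.ofReal (Φv v (x v))) *
     ∏ q ∈ bpD G (bpS G j i), bpEE Φe q x)

/-- the `ℝ≥0∞`-valued message along the directed edge `j → i`. -/
noncomputable def bpM (G : SimpleGraph (Fin n)) (Φv : Fin n → ℝ → ℝ)
    (Φe : Fin n → Fin n → ℝ → ℝ → ℝ) (j i : Fin n) (t : ℝ) : ℝ≥0∞ :=
  (∫⋯∫⁻_(bpS G j i), bpP G Φv Φe j i ∂(fun _ => (volume : Measure ℝ))) (fun _ => t)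

lemma bp_meas_edge (hemeas : ∀ i j, Measurable (Function.uncurry (Φe i j)))
    (a b u v : Fin n) :
    Measurable fun x : Fin n → ℝ => ENNReal.ofReal (Φe a b (x u) (x v)) := by
  have h : Measurable fun x : Fin n → ℝ => ((x u, x v) : ℝ × ℝ) :=
    (measurable_pi_apply u).prodMk (measurable_pi_apply v)
  exact ((hemeas a b).comp h).ennreal_ofReal

lemma bp_meas_vert (hvmeas : ∀ i, Measurable (Φv i)) (a u : Fin n) :
    Measurable fun x : Fin n → ℝ => ENNReal.ofReal (Φv a (x u)) :=
  ((hvmeas a).comp (measurable_pi_apply u)).ennreal_ofReal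

lemma bpP_meas (hvmeas : ∀ i, Measurable (Φv i))
    (hemeas : ∀ i j, Measurable (Function.uncurry (Φe i j))) (j i : Fin n) :
    Measurable (bpP G Φv Φe j i) := by
  refine (bp_meas_edge hemeas i j i j).mul (Measurable.mul ?_ ?_)
  · exact Finset.measurable_prod _ fun v _ => bp_meas_vert hvmeas v v
  · exact Finset.measurable_prod _ fun q _ => bp_meas_edge hemeas q.1 q.2 q.1 q.2

lemma bpM_meas (hvmeas : ∀ i, Measurable (Φv i))
    (hemeas : ∀ i j, Measurable (Function.uncurry (Φe i j))) (j i : Fin n) :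
    Measurable (bpM G Φv Φe j i) :=
  ((bpP_meas hvmeas hemeas j i).lmarginal _).comp
    (measurable_pi_lambda _ fun _ => measurable_id)

lemma bpP_dep (hT : G.IsTree) {j i : Fin n} (hadj : G.Adj j i) {x y : Fin n → ℝ}
    (h : ∀ a ∈ insert i (bpS G j i), x a = y a) :
    bpP G Φv Φe j i x = bpP G Φv Φe j i y := by
  have hi : x i = y i := h i (Finset.mem_insert_self _ _)
  have hS : ∀ a ∈ bpS G j i, x a = y a := fun a ha =>
    h a (Finset.mem_insert_of_mem ha)
  unfold bpP
  rw [hi, hS j (bpS_self G j i)]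
  congr 1
  congr 1
  · exact Finset.prod_congr rfl fun v hv => by rw [hS v hv]
  · refine Finset.prod_congr rfl fun q hq => ?_
    rw [mem_bpD] at hq
    unfold bpEE
    rw [hS q.1 hq.1, hS q.2 hq.2.1]

/-- pull a factor not depending on the integrated coordinates out of `lmarginal`
(factor on the left). -/
lemma bp_lmarginal_mul_left {s : Finset (Fin n)} {f g : (Fin n → ℝ) → ℝ≥0∞}
    (hg : Measurable g)
    (hf : ∀ x y : Fin n → ℝ, (∀ a, a ∉ s → x a = y a) → f x = f y) :
    (∫⋯∫⁻_s, (fun x => f x * g x) ∂(fun _ => (volume : Measure ℝ)))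
      = fun x => f x * (∫⋯∫⁻_s, g ∂(fun _ => (volume : Measure ℝ))) x := by
  funext x
  have hupd : ∀ y, f (Function.updateFinset x s y) = f x := fun y =>
    hf _ _ fun a ha => by simp [Function.updateFinset, ha]
  simp only [lmarginal, hupd]
  exact lintegral_const_mul _ (hg.comp measurable_updateFinset)

/-- pull a factor not depending on the integrated coordinates out of `lmarginal`
(factor on the right). -/
lemma bp_lmarginal_mul_right {s : Finset (Fin n)} {f g : (Fin n → ℝ) → ℝ≥0∞}
    (hg : Measurable g)
    (hf : ∀ x y : Fin n → ℝ, (∀ a, a ∉ s → x a = y a) → f x = f y) :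
    (∫⋯∫⁻_s, (fun x => g x * f x) ∂(fun _ => (volume : Measure ℝ)))
      = fun x => (∫⋯∫⁻_s, g ∂(fun _ => (volume : Measure ℝ))) x * f x := by
  have : (fun x => g x * f x) = fun x => f x * g x := by funext x; rw [mul_comm]
  rw [this, bp_lmarginal_mul_left hg hf]
  funext x; rw [mul_comm]

lemma bp_lmarginal_eval (hT : G.IsTree) {j i : Fin n} (hadj : G.Adj j i)
    (x : Fin n → ℝ) :
    (∫⋯∫⁻_(bpS G j i), bpP G Φv Φe j i ∂(fun _ => (volume : Measure ℝ))) x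
      = bpM G Φv Φe j i (x i) := by
  have hi : i ∉ bpS G j i := bp_not_mem_bpS hT hadj
  unfold bpM lmarginal
  refine lintegral_congr fun y => ?_
  refine bpP_dep hT hadj fun a ha => ?_
  rcases Finset.mem_insert.1 ha with rfl | haS
  · simp [Function.updateFinset, hi]
  · simp [Function.updateFinset, haS]

/-- the iterated integral of a product of subtree factors over the disjoint union of
the subtrees is the product of the messages. -/
lemma bp_lmarginal_prod (hT : G.IsTree)
    (hvmeas : ∀ i, Measurable (Φv i))
    (hemeas : ∀ i j, Measurable (Function.uncurry (Φe i j)))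
    (r : Fin n) (K : Finset (Fin n)) :
    (∀ k ∈ K, G.Adj k r) →
    (∫⋯∫⁻_(K.biUnion fun k => bpS G k r),
        (fun x => ∏ k ∈ K, bpP G Φv Φe k r x) ∂(fun _ => (volume : Measure ℝ)))
      = fun x => ∏ k ∈ K, bpM G Φv Φe k r (x r) := by
  induction K using Finset.induction with
  | empty => intro _; simp
  | @insert a K ha ih =>
    intro hadj
    have hadjK : ∀ k ∈ K, G.Adj k r := fun k hk => hadj k (Finset.mem_insert_of_mem hk)
    have hadja : G.Adj a r := hadj a (Finset.mem_insert_self a K)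
    have hdis : Disjoint (bpS G a r) (K.biUnion fun k => bpS G k r) := by
      rw [Finset.disjoint_biUnion_right]
      intro k hk
      exact bp_siblings_disjoint hT hadja (hadjK k hk) (fun h => ha (h ▸ hk))
    have hmeasP : Measurable fun x => ∏ k ∈ insert a K, bpP G Φv Φe k r x :=
      Finset.measurable_prod _ fun k _ => bpP_meas hvmeas hemeas k r
    rw [Finset.biUnion_insert,
      lmarginal_union (fun _ => (volume : Measure ℝ)) _ hmeasP hdis]
    have hsplit : (fun x => ∏ k ∈ insert a K, bpP G Φv Φe k r x)
        = fun x => bpP G Φv Φe a r x * ∏ k ∈ K, bpP G Φv Φe k r x := by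
      funext x; rw [Finset.prod_insert ha]
    have hdep_a : ∀ x y : Fin n → ℝ,
        (∀ b, b ∉ K.biUnion (fun k => bpS G k r) → x b = y b) →
        bpP G Φv Φe a r x = bpP G Φv Φe a r y := by
      intro x y hxy
      refine bpP_dep hT hadja fun b hb => hxy b ?_
      rw [Finset.mem_biUnion]
      rintro ⟨k, hk, hbk⟩
      rcases Finset.mem_insert.1 hb with rfl | hbS
      · exact bp_not_mem_bpS hT (hadjK k hk) hbk
      · exact Finset.disjoint_left.1 hdis hbS (Finset.mem_biUnion.2 ⟨k, hk, hbk⟩)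
    have hinner : (∫⋯∫⁻_(K.biUnion fun k => bpS G k r),
        (fun x => ∏ k ∈ insert a K, bpP G Φv Φe k r x) ∂(fun _ => (volume : Measure ℝ)))
        = fun x => bpP G Φv Φe a r x * ∏ k ∈ K, bpM G Φv Φe k r (x r) := by
      rw [hsplit, bp_lmarginal_mul_left
        (Finset.measurable_prod _ fun k _ => bpP_meas hvmeas hemeas k r) hdep_a,
        ih hadjK]
    rw [hinner]
    have hdep_m : ∀ x y : Fin n → ℝ, (∀ b, b ∉ bpS G a r → x b = y b) →
        (∏ k ∈ K, bpM G Φv Φe k r (x r)) = ∏ k ∈ K, bpM G Φv Φe k r (y r) := by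
      intro x y hxy
      rw [hxy r (bp_not_mem_bpS hT hadja)]
    rw [bp_lmarginal_mul_right (bpP_meas hvmeas hemeas a r) hdep_m]
    funext x
    rw [bp_lmarginal_eval hT hadja, Finset.prod_insert ha]

end Measures

section Fact

variable {G : SimpleGraph (Fin n)} {Φv : Fin n → ℝ → ℝ} {Φe : Fin n → Fin n → ℝ → ℝ → ℝ}
variable {r : Fin n} {T K : Finset (Fin n)}

lemma BPCtx.fact (hC : BPCtx G r T K)
    (hsymm : ∀ i j a b, Φe i j a b = Φe j i b a) (x : Fin n → ℝ) :
    (∏ v ∈ T, ENNReal.ofReal (Φv v (x v))) * ∏ q ∈ bpD G T, bpEE Φe q x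
      = ENNReal.ofReal (Φv r (x r)) * ∏ k ∈ K, bpP G Φv Φe k r x := by
  have hV : ∏ v ∈ T, ENNReal.ofReal (Φv v (x v))
      = ENNReal.ofReal (Φv r (x r)) *
        ∏ k ∈ K, ∏ v ∈ bpS G k r, ENNReal.ofReal (Φv v (x v)) := by
    rw [hC.T_eq, Finset.prod_insert hC.not_mem_biUnion, Finset.prod_biUnion]
    intro k hk k' hk' hne
    exact hC.S_pairwise_disjoint hk hk' hne
  have hE : ∏ q ∈ bpD G T, bpEE Φe q x
      = (∏ k ∈ K, ENNReal.ofReal (Φe r k (x r) (x k))) *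
        ∏ k ∈ K, ∏ q ∈ bpD G (bpS G k r), bpEE Φe q x := by
    rw [hC.D_eq, Finset.prod_union hC.image_disjoint_biUnion, Finset.prod_image, Finset.prod_biUnion]
    · congr 1
      refine Finset.prod_congr rfl fun k hk => ?_
      unfold bpEE bpPr
      split_ifs with h
      · rfl
      · exact congrArg ENNReal.ofReal (hsymm k r (x k) (x r))
    · intro k hk k' hk' hne
      exact hC.D_pairwise_disjoint hk hk' hne
    · intro a ha b hb hab
      exact hC.pr_injOn ha hb hab
  rw [hV, hE]
  unfold bpP
  rw [Finset.prod_mul_distrib, Finset.prod_mul_distrib]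
  ring

lemma BPCtx.lmarg (hC : BPCtx G r T K)
    (hvmeas : ∀ i, Measurable (Φv i))
    (hemeas : ∀ i j, Measurable (Function.uncurry (Φe i j)))
    (hsymm : ∀ i j a b, Φe i j a b = Φe j i b a)
    (E0 : (Fin n → ℝ) → ℝ≥0∞) (hE0m : Measurable E0)
    (hE0dep : ∀ x y : Fin n → ℝ,
      (∀ a, a ∉ K.biUnion (fun k => bpS G k r) → x a = y a) → E0 x = E0 y)
    (x : Fin n → ℝ) :
    (∫⋯∫⁻_T, (fun z => E0 z * ((∏ v ∈ T, ENNReal.ofReal (Φv v (z v))) *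
        ∏ q ∈ bpD G T, bpEE Φe q z)) ∂(fun _ => (volume : Measure ℝ))) x
      = ∫⁻ s, E0 (Function.update x r s) *
          (ENNReal.ofReal (Φv r s) * ∏ k ∈ K, bpM G Φv Φe k r s) := by
  have hfact : (fun z => E0 z * ((∏ v ∈ T, ENNReal.ofReal (Φv v (z v))) *
        ∏ q ∈ bpD G T, bpEE Φe q z))
      = fun z => (E0 z * ENNReal.ofReal (Φv r (z r))) * ∏ k ∈ K, bpP G Φv Φe k r z := by
    funext z
    rw [hC.fact hsymm z, mul_assoc]
  have hmeas : Measurable fun z => (E0 z * ENNReal.ofReal (Φv r (z r))) *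
      ∏ k ∈ K, bpP G Φv Φe k r z := by
    refine (hE0m.mul (bp_meas_vert hvmeas r r)).mul ?_
    exact Finset.measurable_prod _ fun k _ => bpP_meas hvmeas hemeas k r
  rw [hfact, hC.T_eq, lmarginal_insert _ hmeas hC.not_mem_biUnion x]
  have hdep : ∀ z y : Fin n → ℝ,
      (∀ a, a ∉ K.biUnion (fun k => bpS G k r) → z a = y a) →
      E0 z * ENNReal.ofReal (Φv r (z r)) = E0 y * ENNReal.ofReal (Φv r (y r)) := by
    intro z y hzy
    rw [hE0dep z y hzy, hzy r hC.not_mem_biUnion]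
  rw [bp_lmarginal_mul_left
    (Finset.measurable_prod _ fun k _ => bpP_meas hvmeas hemeas k r) hdep,
    bp_lmarginal_prod hC.htree hvmeas hemeas r K hC.hadj]
  refine lintegral_congr fun s => ?_
  simp only [Function.update_self, mul_assoc]

end Fact

section Instances

variable {G : SimpleGraph (Fin n)} {Φv : Fin n → ℝ → ℝ} {Φe : Fin n → Fin n → ℝ → ℝ → ℝ}

lemma bpCtx_edge (hT : G.IsTree) {j i : Fin n} (hadj : G.Adj j i) :
    BPCtx G j (bpS G j i) ((G.neighborFinset j).erase i) where
  htree := hT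
  hrT := bpS_self G j i
  hadj := fun k hk => by
    rw [Finset.mem_erase, G.mem_neighborFinset] at hk
    exact hk.2.symm
  hsub := fun k hk => by
    rw [Finset.mem_erase, G.mem_neighborFinset] at hk
    exact bpS_subset hT hadj hk.2.symm hk.1
  hcov := fun x hx hxj => by
    obtain ⟨k, hk, hki, hmem⟩ := bp_cover_edge hT hadj hx hxj
    exact ⟨k, Finset.mem_erase.2 ⟨hki, (G.mem_neighborFinset _ _).2 hk.symm⟩, hmem⟩
  hmemK := fun k hk hkT => by
    refine Finset.mem_erase.2 ⟨?_, (G.mem_neighborFinset _ _).2 hk.symm⟩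
    rintro rfl
    exact bp_not_mem_bpS hT hadj hkT

lemma bpCtx_root (hT : G.IsTree) (i : Fin n) :
    BPCtx G i Finset.univ (G.neighborFinset i) where
  htree := hT
  hrT := Finset.mem_univ i
  hadj := fun k hk => ((G.mem_neighborFinset _ _).1 hk).symm
  hsub := fun _ _ => Finset.subset_univ _
  hcov := fun x _ hxi => by
    obtain ⟨k, hk, hmem⟩ := bp_cover hT hxi
    exact ⟨k, (G.mem_neighborFinset _ _).2 hk.symm, hmem⟩
  hmemK := fun k hk _ => (G.mem_neighborFinset _ _).2 hk.symm

/-- Sum-product recursion for the `ℝ≥0∞`-messages. -/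
lemma bpM_rec (hT : G.IsTree)
    (hvmeas : ∀ i, Measurable (Φv i))
    (hemeas : ∀ i j, Measurable (Function.uncurry (Φe i j)))
    (hsymm : ∀ i j a b, Φe i j a b = Φe j i b a)
    {j i : Fin n} (hadj : G.Adj j i) (t : ℝ) :
    bpM G Φv Φe j i t
      = ∫⁻ s, ENNReal.ofReal (Φe i j t s) *
          (ENNReal.ofReal (Φv j s) *
            ∏ k ∈ (G.neighborFinset j).erase i, bpM G Φv Φe k j s) := by
  have hC := bpCtx_edge hT hadj
  have hij : i ≠ j := fun h => G.irrefl (h ▸ hadj)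
  have hE0dep : ∀ x y : Fin n → ℝ,
      (∀ a, a ∉ ((G.neighborFinset j).erase i).biUnion (fun k => bpS G k j) → x a = y a) →
      ENNReal.ofReal (Φe i j (x i) (x j)) = ENNReal.ofReal (Φe i j (y i) (y j)) := by
    intro x y hxy
    have hiB : i ∉ ((G.neighborFinset j).erase i).biUnion fun k => bpS G k j := by
      rw [Finset.mem_biUnion]
      rintro ⟨k, hk, hmem⟩
      exact bp_not_mem_bpS hT hadj (hC.hsub k hk hmem)
    rw [hxy i hiB, hxy j hC.not_mem_biUnion]
  have h := hC.lmarg hvmeas hemeas hsymm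
    (fun z => ENNReal.ofReal (Φe i j (z i) (z j)))
    (bp_meas_edge hemeas i j i j) hE0dep (fun _ => t)
  have hlhs : bpM G Φv Φe j i t
      = (∫⋯∫⁻_(bpS G j i), (fun z => ENNReal.ofReal (Φe i j (z i) (z j)) *
          ((∏ v ∈ bpS G j i, ENNReal.ofReal (Φv v (z v))) *
            ∏ q ∈ bpD G (bpS G j i), bpEE Φe q z)) ∂(fun _ => (volume : Measure ℝ)))
          (fun _ => t) := rfl
  rw [hlhs, h]
  refine lintegral_congr fun s => ?_
  simp only [Function.update_of_ne hij, Function.update_self]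

/-- Root identity: the total integral of the joint factor. -/
lemma bp_root (hT : G.IsTree)
    (hvmeas : ∀ i, Measurable (Φv i))
    (hemeas : ∀ i j, Measurable (Function.uncurry (Φe i j)))
    (hsymm : ∀ i j a b, Φe i j a b = Φe j i b a)
    (i : Fin n) :
    ∫⁻ x, ((∏ v, ENNReal.ofReal (Φv v (x v))) * ∏ q ∈ bpD G Finset.univ, bpEE Φe q x)
        ∂(Measure.pi fun _ : Fin n => (volume : Measure ℝ))
      = ∫⁻ t, ENNReal.ofReal (Φv i t) * ∏ k ∈ G.neighborFinset i, bpM G Φv Φe k i t := by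
  have hC := bpCtx_root hT i
  rw [lintegral_eq_lmarginal_univ (fun _ : Fin n => (0 : ℝ))]
  have h := hC.lmarg hvmeas hemeas hsymm (fun _ => 1) measurable_const
    (fun _ _ _ => rfl) (fun _ : Fin n => (0 : ℝ))
  simp only [one_mul] at h
  rw [h]

end Instances

lemma bp_prod_aux {ι : Type*} (s : Finset ι) (F : ι → ℝ≥0∞) (f : ι → ℝ)
    (hnn : ∀ k ∈ s, 0 ≤ f k)
    (hrel : ∀ k ∈ s, F k ≠ ⊤ → f k = (F k).toReal)
    (htop : ∏ k ∈ s, F k ≠ ⊤) :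
    ENNReal.ofReal (∏ k ∈ s, f k) = ∏ k ∈ s, F k := by
  by_cases hfin : ∀ k ∈ s, F k ≠ ⊤
  · rw [ENNReal.ofReal_prod_of_nonneg hnn]
    refine Finset.prod_congr rfl fun k hk => ?_
    rw [hrel k hk (hfin k hk), ENNReal.ofReal_toReal (hfin k hk)]
  · push_neg at hfin
    obtain ⟨k0, hk0, hk0top⟩ := hfin
    have hzero : ∃ k1 ∈ s, F k1 = 0 := by
      by_contra hz
      push_neg at hz
      apply htop
      rw [← Finset.prod_erase_mul s F hk0, hk0top, ENNReal.mul_top]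
      exact Finset.prod_ne_zero_iff.2 fun k hk => hz k (Finset.mem_of_mem_erase hk)
    obtain ⟨k1, hk1, hF1⟩ := hzero
    have hf1 : f k1 = 0 := by
      rw [hrel k1 hk1 (by rw [hF1]; exact ENNReal.zero_ne_top), hF1, ENNReal.toReal_zero]
    rw [Finset.prod_eq_zero hk1 hf1, Finset.prod_eq_zero hk1 hF1, ENNReal.ofReal_zero]

lemma bp_point {ι : Type*} (s : Finset ι) (F : ι → ℝ≥0∞) (f : ι → ℝ) (c : ℝ)
    (hc : 0 ≤ c)
    (hnn : ∀ k ∈ s, 0 ≤ f k)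
    (hrel : ∀ k ∈ s, F k ≠ ⊤ → f k = (F k).toReal)
    (h : ENNReal.ofReal c * ∏ k ∈ s, F k ≠ ⊤) :
    ENNReal.ofReal (c * ∏ k ∈ s, f k) = ENNReal.ofReal c * ∏ k ∈ s, F k := by
  rw [ENNReal.ofReal_mul hc]
  by_cases hc0 : ENNReal.ofReal c = 0
  · rw [hc0, zero_mul, zero_mul]
  · have hFfin : ∏ k ∈ s, F k ≠ ⊤ := by
      intro htop
      rw [htop, ENNReal.mul_top hc0] at h
      exact h rfl
    rw [bp_prod_aux s F f hnn hrel hFfin]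

/-- Correctness of belief propagation (sum-product) on a continuous
tree-structured model. The joint factor is
`p x = (∏ i Φv i (x i)) · ∏_{i<j, i~j} Φe i j (x i) (x j)` with symmetric
nonnegative edge kernels; messages satisfy the sum-product recursion
`m_{j→i}(t) = ∫ Φe i j t s · Φv j s · ∏_{k ∈ N(j)∖{i}} m_{k→j}(s) ds`.
Then at every vertex `i` the total integral of `p` equals
`∫ Φv i (t) · ∏_{j ∈ N(i)} m_{j→i}(t) dt`. -/
theorem stmt18 (n : ℕ) (G : SimpleGraph (Fin n)) (hT : G.IsTree)
    (Φv : Fin n → ℝ → ℝ) (Φe : Fin n → Fin n → ℝ → ℝ → ℝ)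
    (hvmeas : ∀ i, Measurable (Φv i)) (hvnn : ∀ i t, 0 ≤ Φv i t)
    (hemeas : ∀ i j, Measurable (Function.uncurry (Φe i j)))
    (henn : ∀ i j a b, 0 ≤ Φe i j a b)
    (hsymm : ∀ i j a b, Φe i j a b = Φe j i b a)
    (p : (Fin n → ℝ) → ℝ)
    (hp : ∀ x, p x = (∏ i, Φv i (x i)) *
      ∏ i, ∏ j, if i < j ∧ G.Adj i j then Φe i j (x i) (x j) else 1)
    (m : Fin n → Fin n → ℝ → ℝ)
    (hm : ∀ i j, G.Adj j i → ∀ t : ℝ, m j i t =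
      ∫ s : ℝ, Φe i j t s * Φv j s *
        ∏ k ∈ (G.neighborFinset j).erase i, m k j s)
    (hpint : Integrable p (Measure.pi fun _ : Fin n => (volume : Measure ℝ)))
    (hbint : ∀ i : Fin n,
      Integrable (fun t : ℝ => Φv i t * ∏ j ∈ G.neighborFinset i, m j i t)) :
    ∀ i : Fin n,
      (∫ x, p x ∂(Measure.pi fun _ : Fin n => (volume : Measure ℝ))) =
      ∫ t : ℝ, Φv i t * ∏ j ∈ G.neighborFinset i, m j i t := by
  -- the key induction: real messages agree with the ENNReal messages where finite
  have RM : ∀ N : ℕ, ∀ j i : Fin n, G.Adj j i → (bpS G j i).card ≤ N →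
      Measurable (m j i) ∧ (∀ t, 0 ≤ m j i t) ∧
      (∀ t, bpM G Φv Φe j i t ≠ ⊤ → m j i t = (bpM G Φv Φe j i t).toReal) := by
    intro N
    induction N with
    | zero =>
      intro j i hadj hcard
      exfalso
      have : bpS G j i = ∅ := Finset.card_eq_zero.1 (Nat.le_zero.1 hcard)
      exact Finset.notMem_empty j (this ▸ bpS_self G j i)
    | succ N ih =>
      intro j i hadj hcard
      have hKfacts : ∀ k ∈ (G.neighborFinset j).erase i, G.Adj k j ∧
          (Measurable (m k j) ∧ (∀ t, 0 ≤ m k j t) ∧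
          (∀ t, bpM G Φv Φe k j t ≠ ⊤ → m k j t = (bpM G Φv Φe k j t).toReal)) := by
        intro k hk
        rw [Finset.mem_erase, G.mem_neighborFinset] at hk
        have hadjk : G.Adj k j := hk.2.symm
        have hlt := bpS_card_lt hT hadj hadjk hk.1
        exact ⟨hadjk, ih k j hadjk (by omega)⟩
      have hmeq : m j i = fun t => ∫ s, Φe i j t s * Φv j s *
          ∏ k ∈ (G.neighborFinset j).erase i, m k j s := funext (hm i j hadj)
      have hintmeas : Measurable (fun q : ℝ × ℝ => Φe i j q.1 q.2 * Φv j q.2 *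
          ∏ k ∈ (G.neighborFinset j).erase i, m k j q.2) := by
        refine ((hemeas i j).mul ((hvmeas j).comp measurable_snd)).mul ?_
        exact Finset.measurable_prod _ fun k hk =>
          ((hKfacts k hk).2.1).comp measurable_snd
      have hmeas : Measurable (m j i) := by
        rw [hmeq]
        exact hintmeas.stronglyMeasurable.integral_prod_right'.measurable
      have hnn : ∀ t, 0 ≤ m j i t := by
        intro t
        rw [hm i j hadj t]
        refine integral_nonneg fun s => ?_
        exact mul_nonneg (mul_nonneg (henn i j t s) (hvnn j s))
          (Finset.prod_nonneg fun k hk => (hKfacts k hk).2.2.1 s)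
      refine ⟨hmeas, hnn, ?_⟩
      intro t hfin
      have hrec := bpM_rec hT hvmeas hemeas hsymm hadj t
      set W : ℝ → ℝ≥0∞ := fun s => ENNReal.ofReal (Φe i j t s) *
          (ENNReal.ofReal (Φv j s) *
            ∏ k ∈ (G.neighborFinset j).erase i, bpM G Φv Φe k j s) with hWdef
      have hWmeas : Measurable W := by
        refine (((hemeas i j).comp
          (measurable_const.prodMk measurable_id)).ennreal_ofReal).mul ?_
        exact ((hvmeas j).ennreal_ofReal).mul
          (Finset.measurable_prod _ fun k _ => bpM_meas hvmeas hemeas k j)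
      have hWfin : ∀ᵐ s : ℝ, W s < ⊤ := by
        refine ae_lt_top hWmeas ?_
        rw [← hrec]; exact hfin
      have haeeq : (fun s => ENNReal.ofReal (Φe i j t s * Φv j s *
          ∏ k ∈ (G.neighborFinset j).erase i, m k j s)) =ᵐ[volume] W := by
        filter_upwards [hWfin] with s hs
        have hW' : W s = ENNReal.ofReal (Φe i j t s * Φv j s) *
            ∏ k ∈ (G.neighborFinset j).erase i, bpM G Φv Φe k j s := by
          rw [hWdef, ENNReal.ofReal_mul (henn i j t s), mul_assoc]
        rw [hW']
        exact bp_point _ _ _ _ (mul_nonneg (henn i j t s) (hvnn j s))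
          (fun k hk => (hKfacts k hk).2.2.1 s)
          (fun k hk hne => (hKfacts k hk).2.2.2 s hne)
          (hW' ▸ hs.ne)
      rw [hm i j hadj t,
        integral_eq_lintegral_of_nonneg_ae
          (Filter.Eventually.of_forall fun s => mul_nonneg
            (mul_nonneg (henn i j t s) (hvnn j s))
            (Finset.prod_nonneg fun k hk => (hKfacts k hk).2.2.1 s))
          ((hintmeas.comp (measurable_const.prodMk measurable_id)).aestronglyMeasurable),
        lintegral_congr_ae haeeq, ← hrec]
  intro i
  -- facts about the neighbors of the root
  have hRootFacts : ∀ k ∈ G.neighborFinset i, G.Adj k i ∧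
      (Measurable (m k i) ∧ (∀ t, 0 ≤ m k i t) ∧
      (∀ t, bpM G Φv Φe k i t ≠ ⊤ → m k i t = (bpM G Φv Φe k i t).toReal)) := by
    intro k hk
    have hadjk : G.Adj k i := ((G.mem_neighborFinset _ _).1 hk).symm
    refine ⟨hadjk, RM n k i hadjk ?_⟩
    calc (bpS G k i).card ≤ (Finset.univ : Finset (Fin n)).card := Finset.card_le_univ _
      _ = n := by simp
  -- nonnegativity and measurability of p
  have hppos : ∀ x, 0 ≤ p x := by
    intro x
    rw [hp x]
    refine mul_nonneg (Finset.prod_nonneg fun v _ => hvnn v (x v)) ?_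
    refine Finset.prod_nonneg fun a _ => Finset.prod_nonneg fun b _ => ?_
    split_ifs with h
    · exact henn a b (x a) (x b)
    · exact zero_le_one
  -- rewrite ofReal p as the ENNReal joint factor
  have hprodD : ∀ x : Fin n → ℝ, (∏ q ∈ bpD G Finset.univ, bpEE Φe q x)
      = ∏ a, ∏ b, if a < b ∧ G.Adj a b
          then ENNReal.ofReal (Φe a b (x a) (x b)) else 1 := by
    intro x
    rw [bpD, Finset.prod_filter, Finset.prod_product]
    rfl
  have hpeq : ∀ x, ENNReal.ofReal (p x) = (∏ v, ENNReal.ofReal (Φv v (x v))) *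
      ∏ q ∈ bpD G Finset.univ, bpEE Φe q x := by
    intro x
    rw [hp x, ENNReal.ofReal_mul (Finset.prod_nonneg fun v _ => hvnn v (x v)),
      ENNReal.ofReal_prod_of_nonneg (fun v _ => hvnn v (x v)), hprodD x]
    congr 1
    rw [ENNReal.ofReal_prod_of_nonneg]
    · refine Finset.prod_congr rfl fun a _ => ?_
      rw [ENNReal.ofReal_prod_of_nonneg]
      · refine Finset.prod_congr rfl fun b _ => ?_
        split_ifs with h
        · rfl
        · exact ENNReal.ofReal_one
      · intro b _
        split_ifs with h
        · exact henn a b (x a) (x b)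
        · exact zero_le_one
    · intro a _
      refine Finset.prod_nonneg fun b _ => ?_
      split_ifs with h
      · exact henn a b (x a) (x b)
      · exact zero_le_one
  -- finiteness of the total integral
  have hfinp : ∫⁻ x, ENNReal.ofReal (p x)
      ∂(Measure.pi fun _ : Fin n => (volume : Measure ℝ)) ≠ ⊤ := by
    have : ∀ x, ENNReal.ofReal (p x) = (‖p x‖₊ : ℝ≥0∞) := by
      intro x
      rw [← Real.enorm_eq_ofReal (hppos x)]
      exact enorm_eq_nnnorm _
    rw [lintegral_congr this]
    exact hpint.2.ne
  have hroot := bp_root (G := G) (Φv := Φv) (Φe := Φe) hT hvmeas hemeas hsymm i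
  have hIeq : ∫⁻ x, ENNReal.ofReal (p x)
      ∂(Measure.pi fun _ : Fin n => (volume : Measure ℝ))
      = ∫⁻ t, ENNReal.ofReal (Φv i t) *
          ∏ k ∈ G.neighborFinset i, bpM G Φv Φe k i t := by
    rw [lintegral_congr hpeq, hroot]
  have hImeas : Measurable fun t => ENNReal.ofReal (Φv i t) *
      ∏ k ∈ G.neighborFinset i, bpM G Φv Φe k i t :=
    ((hvmeas i).ennreal_ofReal).mul
      (Finset.measurable_prod _ fun k _ => bpM_meas hvmeas hemeas k i)
  have hIfin : ∫⁻ t, ENNReal.ofReal (Φv i t) *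
      ∏ k ∈ G.neighborFinset i, bpM G Φv Φe k i t ≠ ⊤ := by
    rw [← hIeq]; exact hfinp
  have haefin := ae_lt_top hImeas hIfin
  have haeeq : (fun t => ENNReal.ofReal (Φv i t *
      ∏ k ∈ G.neighborFinset i, m k i t)) =ᵐ[volume]
      fun t => ENNReal.ofReal (Φv i t) *
        ∏ k ∈ G.neighborFinset i, bpM G Φv Φe k i t := by
    filter_upwards [haefin] with t ht
    exact bp_point _ _ _ _ (hvnn i t)
      (fun k hk => (hRootFacts k hk).2.2.1 t)
      (fun k hk hne => (hRootFacts k hk).2.2.2 t hne)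
      ht.ne
  have hgmeas : Measurable fun t => Φv i t * ∏ k ∈ G.neighborFinset i, m k i t :=
    (hvmeas i).mul (Finset.measurable_prod _ fun k hk => (hRootFacts k hk).2.1)
  calc ∫ x, p x ∂(Measure.pi fun _ : Fin n => (volume : Measure ℝ))
      = (∫⁻ x, ENNReal.ofReal (p x)
          ∂(Measure.pi fun _ : Fin n => (volume : Measure ℝ))).toReal :=
        integral_eq_lintegral_of_nonneg_ae
          (Filter.Eventually.of_forall hppos) hpint.1
    _ = (∫⁻ t, ENNReal.ofReal (Φv i t *
          ∏ k ∈ G.neighborFinset i, m k i t)).toReal := by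
        rw [hIeq, lintegral_congr_ae haeeq]
    _ = ∫ t, Φv i t * ∏ k ∈ G.neighborFinset i, m k i t :=
        (integral_eq_lintegral_of_nonneg_ae
          (Filter.Eventually.of_forall fun t => mul_nonneg (hvnn i t)
            (Finset.prod_nonneg fun k hk => (hRootFacts k hk).2.2.1 t))
          hgmeas.aestronglyMeasurable).symm
end
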